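/- arXiv:1504.04181 — 8 statements merged into one kernel-verified Lean document; each statement's English description precedes it below -/
import Mathlib

section
/- Let U be a nonempty subset of ℕ with 0 ∉ U and 1 ∉ U. Let V be a finite set of variables, T ⊆ V × V × V a set of multiplication atoms, and W ⊆ V a set of unary atoms. Let V' be the least subset of V that contains W and is closed under the two rules: (i) if (x,y,z) ∈ T and z ∈ V' then x ∈ V' and y ∈ V'; (ii) if (x,y,z) ∈ T and x ∈ V' and y ∈ V' then z ∈ V'. Then there exists a satisfying map s : V → ℕ for the instance if and only if there exists a satisfying map s : V → ℕ such that s(v) ≥ 1 for every v ∈ V' and s(v) = 0 for every v ∉ V'. -/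
/-! The support of a solution contains `W` (as `0 ∉ U`) and is closed under both rules (as `ℕ` has
no zero divisors), so it contains `V'`. Conversely, setting a solution to `0` outside `V'` keeps
every atom `s x * s y = s z` true: if `z ∈ V'` then `x, y ∈ V'` and nothing changes, and if
`z ∉ V'` then `x` or `y` lies outside `V'` too, so both sides become `0`. -/

section MulAtoms

variable {V M : Type*} (T : Set (V × V × V))

lemma support_down_closed [MulZeroClass M] {s : V → M}
    (hT : ∀ x y z : V, (x, y, z) ∈ T → s x * s y = s z) :
    ∀ x y z : V, (x, y, z) ∈ T → z ∈ Function.support s →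
      x ∈ Function.support s ∧ y ∈ Function.support s := by
  intro x y z hxyz hz
  rw [Function.mem_support, ← hT x y z hxyz] at hz
  exact ⟨left_ne_zero_of_mul hz, right_ne_zero_of_mul hz⟩

lemma support_up_closed [MulZeroClass M] [NoZeroDivisors M] {s : V → M}
    (hT : ∀ x y z : V, (x, y, z) ∈ T → s x * s y = s z) :
    ∀ x y z : V, (x, y, z) ∈ T → x ∈ Function.support s → y ∈ Function.support s →
      z ∈ Function.support s := by
  intro x y z hxyz hx hy
  rw [Function.mem_support, ← hT x y z hxyz]
  exact mul_ne_zero hx hy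

lemma indicator_mul_eq_of_closed [MulZeroClass M] {S : Set V} {s : V → M}
    (hT : ∀ x y z : V, (x, y, z) ∈ T → s x * s y = s z)
    (hdown : ∀ x y z : V, (x, y, z) ∈ T → z ∈ S → x ∈ S ∧ y ∈ S)
    (hup : ∀ x y z : V, (x, y, z) ∈ T → x ∈ S → y ∈ S → z ∈ S) :
    ∀ x y z : V, (x, y, z) ∈ T → S.indicator s x * S.indicator s y = S.indicator s z := by
  intro x y z hxyz
  by_cases hz : z ∈ S
  · obtain ⟨hx, hy⟩ := hdown x y z hxyz hz
    simp only [Set.indicator_of_mem hx, Set.indicator_of_mem hy, Set.indicator_of_mem hz]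
    exact hT x y z hxyz
  · rw [Set.indicator_of_notMem hz]
    by_cases hx : x ∈ S
    · rw [Set.indicator_of_notMem (fun hy => hz (hup x y z hxyz hx hy)), mul_zero]
    · rw [Set.indicator_of_notMem hx, zero_mul]

end MulAtoms

theorem statement0_general (U : Set ℕ) (hU0 : 0 ∉ U)
    (V : Type) (T : Set (V × V × V)) (W : Set V)
    (V' : Set V)
    (hW : W ⊆ V')
    (hdown : ∀ x y z : V, (x, y, z) ∈ T → z ∈ V' → x ∈ V' ∧ y ∈ V')
    (hup : ∀ x y z : V, (x, y, z) ∈ T → x ∈ V' → y ∈ V' → z ∈ V')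
    (hleast : ∀ S : Set V, W ⊆ S →
      (∀ x y z : V, (x, y, z) ∈ T → z ∈ S → x ∈ S ∧ y ∈ S) →
      (∀ x y z : V, (x, y, z) ∈ T → x ∈ S → y ∈ S → z ∈ S) →
      V' ⊆ S) :
    (∃ s : V → ℕ,
      (∀ x y z : V, (x, y, z) ∈ T → s x * s y = s z) ∧ (∀ v ∈ W, s v ∈ U)) ↔
    (∃ s : V → ℕ,
      ((∀ x y z : V, (x, y, z) ∈ T → s x * s y = s z) ∧ (∀ v ∈ W, s v ∈ U)) ∧
      (∀ v ∈ V', 1 ≤ s v) ∧ (∀ v ∉ V', s v = 0)) := by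
  constructor
  · rintro ⟨s, hT, hWU⟩
    have hV' : V' ⊆ Function.support s :=
      hleast _ (fun v hv hv0 => hU0 (hv0 ▸ hWU v hv))
        (support_down_closed T hT) (support_up_closed T hT)
    refine ⟨V'.indicator s, ⟨indicator_mul_eq_of_closed T hT hdown hup, fun v hv => ?_⟩,
      fun v hv => ?_, fun v hv => Set.indicator_of_notMem hv s⟩
    · rw [Set.indicator_of_mem (hW hv)]
      exact hWU v hv
    · rw [Set.indicator_of_mem hv]
      exact Nat.one_le_iff_ne_zero.mpr (hV' hv)
  · rintro ⟨s, hs, -⟩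
    exact ⟨s, hs⟩

/-- Preprocessing lemma reducing CSP(ℕ; ×, U) to CSP(ℕ⁺; ×, U).
A CSP instance over (ℕ; ×, U) has variables `V`, multiplication atoms `T` and
unary atoms `W`.  `V'` is the least subset of `V` containing `W` and closed under
the two propagation rules. -/
theorem statement0 (U : Set ℕ) (hUne : U.Nonempty) (hU0 : 0 ∉ U) (hU1 : 1 ∉ U)
    (V : Type) [Fintype V] (T : Set (V × V × V)) (W : Set V)
    (V' : Set V)
    (hW : W ⊆ V')
    (hdown : ∀ x y z : V, (x, y, z) ∈ T → z ∈ V' → x ∈ V' ∧ y ∈ V')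
    (hup : ∀ x y z : V, (x, y, z) ∈ T → x ∈ V' → y ∈ V' → z ∈ V')
    (hleast : ∀ S : Set V, W ⊆ S →
      (∀ x y z : V, (x, y, z) ∈ T → z ∈ S → x ∈ S ∧ y ∈ S) →
      (∀ x y z : V, (x, y, z) ∈ T → x ∈ S → y ∈ S → z ∈ S) →
      V' ⊆ S) :
    (∃ s : V → ℕ,
      (∀ x y z : V, (x, y, z) ∈ T → s x * s y = s z) ∧ (∀ v ∈ W, s v ∈ U)) ↔
    (∃ s : V → ℕ,
      ((∀ x y z : V, (x, y, z) ∈ T → s x * s y = s z) ∧ (∀ v ∈ W, s v ∈ U)) ∧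
      (∀ v ∈ V', 1 ≤ s v) ∧ (∀ v ∉ V', s v = 0)) :=
  statement0_general U hU0 V T W V' hW hdown hup hleast
end

section
/- Let m > 1 be an integer and let U ⊆ ℕ satisfy {m^j : j ≥ 1} ⊆ U and U ⊆ ℕ ∖ {0,1}. Let V be a set of variables, T ⊆ V × V × V a set of atoms, and W ⊆ V. Then there exists s : V → ℕ with s(v) ≥ 1 for all v ∈ V, s(x)·s(y) = s(z) for every (x,y,z) ∈ T, and s(v) ∈ U for every v ∈ W, if and only if there exists s' : V → ℕ with s'(x) + s'(y) = s'(z) for every (x,y,z) ∈ T and s'(v) ≥ 1 for every v ∈ W. -/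
/-!
Along a solution `s` of the multiplicative instance all values are nonzero, so the prime-factor
count `Ω` turns every atom `s x * s y = s z` into `Ω (s x) + Ω (s y) = Ω (s z)`, and `Ω u ≥ 1`
because every `u ∈ U` exceeds `1`. Conversely `k ↦ m ^ k` turns sums into products, and a
positive exponent lands in `U`.
-/

open ArithmeticFunction
open scoped ArithmeticFunction.Omega

section

variable {V α β : Type*}

def SatisfiesAtoms (op : α → α → α) (T : Set (V × V × V)) (s : V → α) : Prop :=
  ∀ x y z : V, (x, y, z) ∈ T → op (s x) (s y) = s z

theorem SatisfiesAtoms.comp {op : α → α → α} {op' : β → β → β} {T : Set (V × V × V)}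
    {s : V → α} (hs : SatisfiesAtoms op T s) {f : α → β}
    (hf : ∀ v w : V, f (op (s v) (s w)) = op' (f (s v)) (f (s w))) :
    SatisfiesAtoms op' T (f ∘ s) := fun x y z hxyz => by
  simp only [Function.comp_apply, ← hf, hs x y z hxyz]

end

/-- satisfiability transfer between multiplicative instances over the
positive integers and additive instances over ℕ, for a set `U` containing all
positive powers of some `m > 1` and contained in ℕ ∖ {0,1}. -/
theorem statement1 (m : ℕ) (hm : 1 < m) (U : Set ℕ)
    (hpow : ∀ j : ℕ, 1 ≤ j → m ^ j ∈ U)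
    (hU : ∀ u ∈ U, u ≠ 0 ∧ u ≠ 1)
    (V : Type) (T : Set (V × V × V)) (W : Set V) :
    (∃ s : V → ℕ, (∀ v : V, 1 ≤ s v) ∧
      (∀ x y z : V, (x, y, z) ∈ T → s x * s y = s z) ∧ (∀ v ∈ W, s v ∈ U)) ↔
    (∃ s' : V → ℕ,
      (∀ x y z : V, (x, y, z) ∈ T → s' x + s' y = s' z) ∧ (∀ v ∈ W, 1 ≤ s' v)) := by
  constructor
  · rintro ⟨s, hpos, hmul, hW⟩
    have hadd : SatisfiesAtoms (· + ·) T (Ω ∘ s) :=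
      SatisfiesAtoms.comp (op := (· * ·)) hmul fun v w =>
        cardFactors_mul (Nat.one_le_iff_ne_zero.mp (hpos v)) (Nat.one_le_iff_ne_zero.mp (hpos w))
    refine ⟨Ω ∘ s, hadd, fun v hv => cardFactors_pos_iff_one_lt.mpr ?_⟩
    obtain ⟨h0, h1⟩ := hU _ (hW v hv)
    omega
  · rintro ⟨s', hadd, hW⟩
    have hmul : SatisfiesAtoms (· * ·) T (m ^ s' ·) :=
      SatisfiesAtoms.comp (op := (· + ·)) (f := (m ^ ·)) hadd fun v w => pow_add m (s' v) (s' w)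
    exact ⟨(m ^ s' ·), fun v => Nat.one_le_pow _ _ (by omega), hmul, fun v hv => hpow _ (hW v hv)⟩
end

section
/- Let m > 1 be an integer that has a degree-one factor, i.e., there is a prime p with p ∣ m and p² ∤ m. Then there exists a function e : ℕ → ℕ such that e(1) = 1, e(m) = m, e(d) ∈ {1, m} for every divisor d of m, and e(x)·e(y) = e(z) for all divisors x, y, z of m with x·y = z. -/
/-!
Send a divisor `d` of `m` to `m` if `p ∣ d` and to `1` otherwise. As `p` is prime, it divides
`x * y` exactly when it divides `x` or `y`, and as `p² ∤ m` it cannot divide both factors of a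
divisor `x * y` of `m`; so this map respects every product of divisors.
-/

lemma not_dvd_and_dvd_of_not_sq_dvd_mul {p x y : ℕ} (h : ¬ p ^ 2 ∣ x * y) : ¬ (p ∣ x ∧ p ∣ y) :=
  fun ⟨hx, hy⟩ => h (sq p ▸ mul_dvd_mul hx hy)

lemma Nat.Prime.ite_dvd_mul_ite_dvd {M : Type*} [MulOneClass M] {p : ℕ} (hp : p.Prime) (a : M)
    {x y : ℕ} (h : ¬ p ^ 2 ∣ x * y) :
    (if p ∣ x then a else 1) * (if p ∣ y then a else 1) = if p ∣ x * y then a else 1 := by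
  have hxy := not_dvd_and_dvd_of_not_sq_dvd_mul h
  simp only [hp.dvd_mul]
  by_cases hx : p ∣ x <;> by_cases hy : p ∣ y <;> simp_all

theorem statement3_general (m : ℕ)
    (p : ℕ) (hp : p.Prime) (hpm : p ∣ m) (hp2 : ¬ p ^ 2 ∣ m) :
    ∃ e : ℕ → ℕ, e 1 = 1 ∧ e m = m ∧
      (∀ d : ℕ, d ∣ m → e d = 1 ∨ e d = m) ∧
      (∀ x y z : ℕ, x ∣ m → y ∣ m → z ∣ m → x * y = z → e x * e y = e z) := by
  refine ⟨fun d => if p ∣ d then m else 1, if_neg hp.not_dvd_one, if_pos hpm,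
    fun d _ => by dsimp only; split_ifs <;> simp, ?_⟩
  rintro x y _ - - hz rfl
  exact hp.ite_dvd_mul_ite_dvd m fun h => hp2 (h.trans hz)

/-- if `m > 1` has a degree-one factor (a prime `p` with `p ∣ m` and
`p² ∤ m`), then there is an endomorphism `e` of the divisor structure of `m`
witnessing that `(Div_m; ×, m)` has a two-element core with universe `{1, m}`. -/
theorem statement3 (m : ℕ) (hm : 1 < m)
    (p : ℕ) (hp : p.Prime) (hpm : p ∣ m) (hp2 : ¬ p ^ 2 ∣ m) :
    ∃ e : ℕ → ℕ, e 1 = 1 ∧ e m = m ∧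
      (∀ d : ℕ, d ∣ m → e d = 1 ∨ e d = m) ∧
      (∀ x y z : ℕ, x ∣ m → y ∣ m → z ∣ m → x * y = z → e x * e y = e z) :=
  statement3_general m p hp hpm hp2
end

section
/- Let m > 1 be an integer with no degree-one factor, i.e., every prime p dividing m satisfies p² ∣ m. Then there is no function e : ℕ → ℕ such that e(m) = m, e(d) ∈ {1, m} for every divisor d of m, and e(x)·e(y) = e(z) for all divisors x, y, z of m with x·y = z. -/
/-!
A map `e` multiplicative on the divisors of `m` is determined by its values at the primes
dividing `m`. If `e d = m` for some `d` with `d * d ∣ m`, then `m * m = e (d * d) ∈ {1, m}`,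
impossible for `m > 1`. Applied to `d = 1` and to every prime `p ∣ m` (where `p ^ 2 ∣ m`), this
forces `e = 1` on all divisors of `m`, contradicting `e m = m`.
-/

theorem Nat.eq_one_of_dvd_of_forall_prime_eq_one {M : Type*} [Monoid M] {m : ℕ} {e : ℕ → M}
    (hm : m ≠ 0) (he1 : e 1 = 1) (hmul : ∀ x y, x * y ∣ m → e x * e y = e (x * y))
    (hprime : ∀ p, p.Prime → p ∣ m → e p = 1) {d : ℕ} (hd : d ∣ m) : e d = 1 := by
  induction d using induction_on_primes with
  | zero => exact absurd (Nat.eq_zero_of_zero_dvd hd) hm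
  | one => exact he1
  | prime_mul p a hp ih =>
    rw [← hmul p a hd, hprime p hp (dvd_of_mul_right_dvd hd), ih (dvd_of_mul_left_dvd hd),
      one_mul]

theorem Nat.mul_self_ne_of_one_lt {m c : ℕ} (hm : 1 < m) (hc : c = 1 ∨ c = m) : m * m ≠ c := by
  rcases hc with rfl | rfl <;> nlinarith

theorem Nat.eq_one_of_mul_self_dvd_of_eq_one_or_eq {m : ℕ} {e : ℕ → ℕ} (hm : 1 < m)
    (hval : ∀ d, d ∣ m → e d = 1 ∨ e d = m) (hmul : ∀ x y, x * y ∣ m → e x * e y = e (x * y))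
    {d : ℕ} (hd : d * d ∣ m) : e d = 1 := by
  refine (hval d (dvd_of_mul_right_dvd hd)).resolve_right fun hed => ?_
  exact Nat.mul_self_ne_of_one_lt hm (hval _ hd) (hed ▸ hmul d d hd)

/-- if `m > 1` has no degree-one factor (every prime dividing `m`
divides it at least twice), then `(Div_m; ×, m)` has no two-element core: there
is no map `e` fixing `m`, taking values in `{1, m}` on divisors of `m`, and
preserving multiplication triples among divisors of `m`. -/
theorem statement4 (m : ℕ) (hm : 1 < m)
    (h : ∀ p : ℕ, p.Prime → p ∣ m → p ^ 2 ∣ m) :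
    ¬ ∃ e : ℕ → ℕ, e m = m ∧
      (∀ d : ℕ, d ∣ m → e d = 1 ∨ e d = m) ∧
      (∀ x y z : ℕ, x ∣ m → y ∣ m → z ∣ m → x * y = z → e x * e y = e z) := by
  rintro ⟨e, hem, hval, hmul⟩
  have hmul' : ∀ x y, x * y ∣ m → e x * e y = e (x * y) := fun x y hxy =>
    hmul x y _ (dvd_of_mul_right_dvd hxy) (dvd_of_mul_left_dvd hxy) hxy rfl
  have he1 : e 1 = 1 :=
    Nat.eq_one_of_mul_self_dvd_of_eq_one_or_eq hm hval hmul' ((one_mul 1).symm ▸ one_dvd m)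
  have hprime : ∀ p, p.Prime → p ∣ m → e p = 1 := fun p hp hpm =>
    Nat.eq_one_of_mul_self_dvd_of_eq_one_or_eq hm hval hmul' (sq p ▸ h p hp hpm)
  have hem1 : e m = 1 :=
    Nat.eq_one_of_dvd_of_forall_prime_eq_one (by omega) he1 hmul' hprime dvd_rfl
  omega
end

section
/- Let m > 1 be an integer such that m ≠ k^n for all integers k, n > 1, let k ≥ 2, and let S be a finite subset of the positive integers with 1 ∈ S and m ∈ S. Let R = {v : {1,…,k} → S | v(1)·v(2)⋯v(k) = m}. Then there is no function t : S^k → S satisfying all of the following: (i) t is idempotent, i.e., t(x,…,x) = x for all x ∈ S; (ii) t satisfies the weak near-unanimity identities, i.e., for all x, y ∈ S and all positions i, j, the value of t on the tuple equal to x in every coordinate except y in coordinate i equals its value on the tuple equal to x in every coordinate except y in coordinate j; (iii) t preserves R, i.e., whenever v₁, …, v_k ∈ R, the tuple whose i-th coordinate is t(v₁(i), …, v_k(i)) also belongs to R. -/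
/-!
The k tuples `(m,1,…,1), (1,m,1,…,1), …, (1,…,1,m)` lie in `R`. Applied coordinatewise to them,
`t` sees in coordinate `i` the tuple with `m` at position `i` and `1` elsewhere, and the weak
near-unanimity identities make all these values one element `a`. Preservation of `R` then
gives `a ^ k = m`, which is impossible for `m > 1` not a perfect power.
-/

theorem Function.update_const_apply_comm {ι α : Type*} [DecidableEq ι] (x y : α) (i j : ι) :
    Function.update (fun _ => x) j y i = Function.update (fun _ => x) i y j := by
  simp only [Function.update_apply, eq_comm]

theorem Fintype.prod_update_const_one {ι M : Type*} [Fintype ι] [DecidableEq ι] [CommMonoid M]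
    (j : ι) (m : M) : ∏ i, Function.update (fun _ => (1 : M)) j m i = m := by
  rw [Finset.prod_update_of_mem (Finset.mem_univ j)]
  simp

theorem Nat.pow_ne_of_not_perfect_power {m k : ℕ} (hm : 1 < m)
    (hnp : ∀ k n : ℕ, 1 < k → 1 < n → m ≠ k ^ n) (hk : 2 ≤ k) (a : ℕ) : a ^ k ≠ m := by
  rintro rfl
  rcases Nat.lt_or_ge a 2 with ha | ha
  · interval_cases a <;> simp [Nat.zero_pow (by omega : 0 < k)] at hm
  · exact hnp a k ha hk rfl

theorem weakNU_apply_update_columns {α : Type*} {k : ℕ} (t : (Fin k → α) → α)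
    (hwnu : ∀ x y : α, ∀ i j : Fin k,
      t (Function.update (fun _ => x) i y) = t (Function.update (fun _ => x) j y))
    (x y : α) (i₀ i : Fin k) :
    t (fun j => Function.update (fun _ => x) j y i) = t (Function.update (fun _ => x) i₀ y) := by
  simp only [Function.update_const_apply_comm x y i]
  exact hwnu x y i i₀

theorem statement5_general (m : ℕ) (hm : 1 < m)
    (hnp : ∀ k n : ℕ, 1 < k → 1 < n → m ≠ k ^ n)
    (k : ℕ) (hk : 2 ≤ k)
    (S : Finset ℕ) (h1S : 1 ∈ S) (hmS : m ∈ S) :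
    ¬ ∃ t : (Fin k → S) → S,
      (∀ x : S, t (fun _ => x) = x) ∧
      (∀ x y : S, ∀ i j : Fin k,
        t (Function.update (fun _ => x) i y) = t (Function.update (fun _ => x) j y)) ∧
      (∀ v : Fin k → (Fin k → S), (∀ j : Fin k, ∏ i, (v j i : ℕ) = m) →
        ∏ i, (t (fun j => v j i) : ℕ) = m) := by
  rintro ⟨t, -, hwnu, hpres⟩
  let one : S := ⟨1, h1S⟩
  let em : S := ⟨m, hmS⟩
  let i₀ : Fin k := ⟨0, by omega⟩
  let v : Fin k → Fin k → S := fun j => Function.update (fun _ => one) j em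
  have hvR : ∀ j, ∏ i, (v j i : ℕ) = m := fun j => by
    simpa [v, Function.apply_update (fun _ => ((↑) : S → ℕ))] using
      Fintype.prod_update_const_one j m
  have hpow : (t (Function.update (fun _ => one) i₀ em) : ℕ) ^ k = m := by
    simpa [v, weakNU_apply_update_columns t hwnu one em i₀] using hpres v hvR
  exact Nat.pow_ne_of_not_perfect_power hm hnp hk _ hpow

/-- if `m > 1` is not a perfect power, `k ≥ 2`, and `S` is a finite
set of positive integers containing `1` and `m`, then there is no idempotent weak
near-unanimity operation `t : Sᵏ → S` preserving the relation
`R = {v : Sᵏ | v 1 ⋯ v k = m}`. -/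
theorem statement5 (m : ℕ) (hm : 1 < m)
    (hnp : ∀ k n : ℕ, 1 < k → 1 < n → m ≠ k ^ n)
    (k : ℕ) (hk : 2 ≤ k)
    (S : Finset ℕ) (hSpos : ∀ x ∈ S, 0 < x) (h1S : 1 ∈ S) (hmS : m ∈ S) :
    ¬ ∃ t : (Fin k → S) → S,
      (∀ x : S, t (fun _ => x) = x) ∧
      (∀ x y : S, ∀ i j : Fin k,
        t (Function.update (fun _ => x) i y) = t (Function.update (fun _ => x) j y)) ∧
      (∀ v : Fin k → (Fin k → S), (∀ j : Fin k, ∏ i, (v j i : ℕ) = m) →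
        ∏ i, (t (fun j => v j i) : ℕ) = m) :=
  statement5_general m hm hnp k hk S h1S hmS
end

section
/- Let U ⊆ ℕ ∖ {0,1} be nonempty and such that basis(U) is finite and basis(U) ≠ {1}. Then there exist integers r ≥ 1 and k ≥ 0 and exponents a₁, …, a_k with aᵢ > r for all i, such that the set X := {y ∈ ℕ | ∃ z ∈ U, ∃ x₁, …, x_k ∈ ℕ, y^r · x₁^{a₁} ⋯ x_k^{a_k} = z} satisfies basis(X) = {1}; that is, X is nonempty, 0 ∉ X, 1 ∉ X, and minexp(y) = 1 for every y ∈ X. -/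
/-- `minexp x` is the least `j ≥ 1` such that some prime `p` satisfies
`p^j ∣ x` and `p^(j+1) ∤ x`; by convention `minexp 1 = 0` (the set is empty,
and `sInf ∅ = 0`). -/
noncomputable def minexp (x : ℕ) : ℕ :=
  sInf {j : ℕ | 1 ≤ j ∧ ∃ p : ℕ, p.Prime ∧ p ^ j ∣ x ∧ ¬ p ^ (j + 1) ∣ x}

/-!
Let `r` be the largest minimal exponent occurring in `U`, attained at `z₀ ∈ U`. Every prime
exponent of `z₀` is at least `r`, so `z₀ = y₀^r · ∏ p^{v_p(z₀)}`, where `y₀` is the product of the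
primes with exponent exactly `r` and the product runs over the primes with exponent `> r`; these
exponents are the `aᵢ`, and `y₀ ∈ X`. Conversely, if `y^r · ∏ xᵢ^{aᵢ} = z ∈ U`, take a prime `p`
with `p^m ∥ z`, `m = minexp z ≤ r`. Since `aᵢ > r ≥ m`, `p` divides no `xᵢ`, so `p ∣ y`; and
`p² ∣ y` would give `p^{2r} ∣ z` with `2r > m`. Hence `p ∥ y` and `minexp y = 1`.
-/

lemma minexp_spec {z : ℕ} (hz : 2 ≤ z) :
    1 ≤ minexp z ∧ ∃ p : ℕ, p.Prime ∧ p ^ minexp z ∣ z ∧ ¬ p ^ (minexp z + 1) ∣ z := by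
  have hp : z.minFac.Prime := Nat.minFac_prime (by omega)
  exact Nat.sInf_mem (s := {j | 1 ≤ j ∧ ∃ p : ℕ, p.Prime ∧ p ^ j ∣ z ∧ ¬ p ^ (j + 1) ∣ z})
    ⟨z.factorization z.minFac, hp.factorization_pos_of_dvd (by omega) (Nat.minFac_dvd z),
      z.minFac, hp, Nat.ordProj_dvd z z.minFac, Nat.pow_succ_factorization_not_dvd (by omega) hp⟩

lemma minexp_le_factorization {z p : ℕ} (hz : z ≠ 0) (hp : p ∈ z.primeFactors) :
    minexp z ≤ z.factorization p :=
  have hpp := Nat.prime_of_mem_primeFactors hp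
  Nat.sInf_le ⟨hpp.factorization_pos_of_dvd hz (Nat.dvd_of_mem_primeFactors hp), p, hpp,
    Nat.ordProj_dvd z p, Nat.pow_succ_factorization_not_dvd hz hpp⟩

lemma minexp_eq_one {y p : ℕ} (hp : p.Prime) (hpy : p ∣ y) (hpy2 : ¬ p ^ 2 ∣ y) :
    minexp y = 1 := by
  have hone : 1 ∈ {j : ℕ | 1 ≤ j ∧ ∃ p : ℕ, p.Prime ∧ p ^ j ∣ y ∧ ¬ p ^ (j + 1) ∣ y} :=
    ⟨le_rfl, p, hp, by simpa using hpy, hpy2⟩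
  exact le_antisymm (Nat.sInf_le hone) (Nat.sInf_mem ⟨1, hone⟩).1

lemma pow_succ_dvd_prod_pow {ι : Type*} {s : Finset ι} {a x : ι → ℕ} {r p : ℕ}
    (ha : ∀ i ∈ s, r < a i) (hp : p.Prime) (h : p ∣ ∏ i ∈ s, x i ^ a i) :
    p ^ (r + 1) ∣ ∏ i ∈ s, x i ^ a i := by
  obtain ⟨i, hi, hpi⟩ := hp.prime.exists_mem_finset_dvd h
  calc p ^ (r + 1) ∣ p ^ a i := pow_dvd_pow p (ha i hi)
    _ ∣ x i ^ a i := pow_dvd_pow_of_dvd (hp.prime.dvd_of_dvd_pow hpi) _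
    _ ∣ ∏ i ∈ s, x i ^ a i := Finset.dvd_prod_of_mem _ hi

lemma exists_prime_dvd_not_sq_dvd_of_pow_mul_eq {y w z r : ℕ} (hz : 2 ≤ z)
    (hr : minexp z ≤ r) (hw : ∀ p, p.Prime → p ∣ w → p ^ (r + 1) ∣ w) (h : y ^ r * w = z) :
    ∃ p, p.Prime ∧ p ∣ y ∧ ¬ p ^ 2 ∣ y := by
  obtain ⟨hm, p, hp, hpz, hpz'⟩ := minexp_spec hz
  have hnot : ¬ p ^ (r + 1) ∣ z := fun hr' => hpz' ((pow_dvd_pow p (by omega)).trans hr')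
  have hpy : p ∣ y := by
    rcases hp.prime.dvd_mul.mp (h ▸ (dvd_pow_self p (by omega)).trans hpz) with hy | hpw
    · exact hp.prime.dvd_of_dvd_pow hy
    · exact absurd ((hw p hp hpw).trans (h ▸ dvd_mul_left w _)) hnot
  refine ⟨p, hp, hpy, fun hsq => hnot ?_⟩
  calc p ^ (r + 1) ∣ p ^ (2 * r) := pow_dvd_pow p (by omega)
    _ = (p ^ 2) ^ r := by rw [pow_mul]
    _ ∣ y ^ r := pow_dvd_pow_of_dvd hsq r
    _ ∣ z := h ▸ dvd_mul_right _ _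

lemma exists_pow_minexp_mul_prod_pow_eq {z : ℕ} (hz : z ≠ 0) :
    ∃ (k : ℕ) (a : Fin k → ℕ), (∀ i, minexp z < a i) ∧
      ∃ (y : ℕ) (x : Fin k → ℕ), y ^ minexp z * ∏ i, x i ^ a i = z := by
  classical
  set r := minexp z
  set F := z.primeFactors.filter (r < z.factorization ·)
  set T := z.primeFactors.filter (¬ r < z.factorization ·)
  refine ⟨F.card, fun i => z.factorization (F.equivFin.symm i),
    fun i => (Finset.mem_filter.mp (F.equivFin.symm i).2).2, ∏ p ∈ T, p,
    fun i => F.equivFin.symm i, ?_⟩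
  have hT : (∏ p ∈ T, p) ^ r = ∏ p ∈ T, p ^ z.factorization p := by
    rw [← Finset.prod_pow]
    refine Finset.prod_congr rfl fun p hp => ?_
    obtain ⟨hpz, hpr⟩ := Finset.mem_filter.mp hp
    rw [le_antisymm (not_lt.mp hpr) (minexp_le_factorization hz hpz)]
  have hF : ∏ i, ((F.equivFin.symm i : F) : ℕ) ^ z.factorization (F.equivFin.symm i) =
      ∏ p ∈ F, p ^ z.factorization p := by
    rw [← Finset.prod_coe_sort F]
    exact F.equivFin.symm.prod_comp fun q : F => (q : ℕ) ^ z.factorization q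
  rw [hT, hF, mul_comm, Finset.prod_filter_mul_prod_filter_not]
  exact Nat.prod_factorization_pow_eq_self hz

theorem statement6_general (U : Set ℕ) (hUne : U.Nonempty)
    (hU : ∀ u ∈ U, u ≠ 0 ∧ u ≠ 1)
    (hfin : (minexp '' U).Finite) :
    ∃ r : ℕ, 1 ≤ r ∧ ∃ (k : ℕ) (a : Fin k → ℕ), (∀ i : Fin k, r < a i) ∧
      ∀ X : Set ℕ,
        X = {y : ℕ | ∃ z ∈ U, ∃ x : Fin k → ℕ, y ^ r * ∏ i, x i ^ a i = z} →
        (minexp '' X = {1} ∧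
          X.Nonempty ∧ 0 ∉ X ∧ 1 ∉ X ∧ ∀ y ∈ X, minexp y = 1) := by
  have h2 : ∀ z ∈ U, 2 ≤ z := fun z hz => by have := hU z hz; omega
  obtain ⟨_, ⟨z₀, hz₀, rfl⟩, hmax⟩ := Set.exists_max_image _ id hfin (hUne.image minexp)
  obtain ⟨k, a, ha, y₀, x₀, hy₀⟩ := exists_pow_minexp_mul_prod_pow_eq (hU z₀ hz₀).1
  refine ⟨minexp z₀, (minexp_spec (h2 z₀ hz₀)).1, k, a, ha, ?_⟩
  intro X hX
  have hsimple : ∀ y ∈ X, ∃ p, p.Prime ∧ p ∣ y ∧ ¬ p ^ 2 ∣ y := by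
    intro y hy
    obtain ⟨z, hz, x, rfl⟩ := hX ▸ hy
    exact exists_prime_dvd_not_sq_dvd_of_pow_mul_eq (h2 _ hz) (hmax _ ⟨_, hz, rfl⟩)
      (fun p hp => pow_succ_dvd_prod_pow (fun i _ => ha i) hp) rfl
  have hone : ∀ y ∈ X, minexp y = 1 := fun y hy =>
    let ⟨_, hp, hpy, hpy2⟩ := hsimple y hy
    minexp_eq_one hp hpy hpy2
  have hy₀X : y₀ ∈ X := hX ▸ ⟨z₀, hz₀, x₀, hy₀⟩
  refine ⟨Set.eq_singleton_iff_unique_mem.mpr ⟨⟨y₀, hy₀X, hone y₀ hy₀X⟩, ?_⟩, ⟨y₀, hy₀X⟩,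
    fun h0 => ?_, fun h1 => ?_, hone⟩
  · rintro _ ⟨y, hy, rfl⟩
    exact hone y hy
  · obtain ⟨p, -, -, hp0⟩ := hsimple 0 h0
    exact hp0 (dvd_zero _)
  · obtain ⟨p, hp, hp1, -⟩ := hsimple 1 h1
    exact hp.one_lt.ne' (Nat.dvd_one.mp hp1)

/-- if `U ⊆ ℕ ∖ {0,1}` is nonempty with finite basis different from
`{1}`, then there are `r ≥ 1`, `k ≥ 0` and exponents `a i > r` such that the set
`X = {y | ∃ z ∈ U, ∃ x₁,…,x_k, y^r · x₁^{a₁} ⋯ x_k^{a_k} = z}` has basis `{1}`: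
`X` is nonempty, `0 ∉ X`, `1 ∉ X` and every element of `X` has minimal exponent 1. -/
theorem statement6 (U : Set ℕ) (hUne : U.Nonempty)
    (hU : ∀ u ∈ U, u ≠ 0 ∧ u ≠ 1)
    (hfin : (minexp '' U).Finite) (hne : minexp '' U ≠ {1}) :
    ∃ r : ℕ, 1 ≤ r ∧ ∃ (k : ℕ) (a : Fin k → ℕ), (∀ i : Fin k, r < a i) ∧
      ∀ X : Set ℕ,
        X = {y : ℕ | ∃ z ∈ U, ∃ x : Fin k → ℕ, y ^ r * ∏ i, x i ^ a i = z} →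
        (minexp '' X = {1} ∧
          X.Nonempty ∧ 0 ∉ X ∧ 1 ∉ X ∧ ∀ y ∈ X, minexp y = 1) :=
  statement6_general U hUne hU hfin
end

section
/- Work in the power set of ℕ, where for A, B ⊆ ℕ the pointwise product is A·B = {a·b : a ∈ A, b ∈ B} and complements are taken relative to ℕ. Let A = {0,1}. Then the set (((Aᶜ · Aᶜ)ᶜ ∩ {0,1,2}ᶜ) · ({0} ∩ {1})ᶜ)ᶜ equals {2^i : i ∈ ℕ}, the set of all powers of 2. -/
/-!
Since `({0} ∩ {1})ᶜ = ℕ`, multiplying by it turns a set `S` into the set of multiples of its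
elements. The product `{0,1}ᶜ · {0,1}ᶜ` is the set of composite numbers, so removing it and
`{0,1,2}` leaves the odd primes. Hence the term is the set of numbers without an odd prime
divisor: `0` is excluded (it is a multiple of `3`), and the nonzero ones are the powers of two.
-/

open Pointwise

theorem Set.mem_mul_univ_iff_exists_dvd {α : Type*} [Monoid α] {s : Set α} {x : α} :
    x ∈ s * Set.univ ↔ ∃ a ∈ s, a ∣ x := by
  simp only [Set.mem_mul, Set.mem_univ, true_and, Dvd.dvd, eq_comm]

namespace Nat

theorem mem_compl_zero_one_mul_compl_zero_one_iff {n : ℕ} :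
    n ∈ ({0, 1} : Set ℕ)ᶜ * ({0, 1} : Set ℕ)ᶜ ↔ 2 ≤ n ∧ ¬ n.Prime := by
  simp only [Set.mem_mul, Set.mem_compl_iff, Set.mem_insert_iff, Set.mem_singleton_iff, not_or]
  constructor
  · rintro ⟨a, ⟨ha0, ha1⟩, b, ⟨hb0, hb1⟩, rfl⟩
    exact ⟨(by omega : 2 ≤ a).trans (Nat.le_mul_of_pos_right a (by omega)), Nat.not_prime_mul ha1 hb1⟩
  · rintro ⟨hn, hnp⟩
    obtain ⟨a, b, ha, hb, rfl⟩ := (Nat.not_prime_iff_exists_mul_eq hn).mp hnp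
    refine ⟨a, ⟨?_, ?_⟩, b, ⟨?_, ?_⟩, rfl⟩ <;> rintro rfl <;> simp_all

theorem compl_composites_inter_compl_zero_one_two :
    (({0, 1} : Set ℕ)ᶜ * ({0, 1} : Set ℕ)ᶜ)ᶜ ∩ ({0, 1, 2} : Set ℕ)ᶜ = {p | p.Prime ∧ p ≠ 2} := by
  ext p
  simp only [Set.mem_inter_iff, Set.mem_compl_iff, mem_compl_zero_one_mul_compl_zero_one_iff,
    Set.mem_insert_iff, Set.mem_singleton_iff, Set.mem_ofPred_eq]
  constructor
  · rintro ⟨hcomp, hp⟩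
    exact ⟨by_contra fun hnp => hcomp ⟨by omega, hnp⟩, by omega⟩
  · rintro ⟨hp, hp2⟩
    exact ⟨fun h => h.2 hp, by have := hp.two_le; omega⟩

theorem exists_eq_two_pow_iff {n : ℕ} :
    (∃ i, n = 2 ^ i) ↔ n ≠ 0 ∧ ∀ p, p.Prime → p ∣ n → p = 2 := by
  constructor
  · rintro ⟨i, rfl⟩
    exact ⟨by positivity, fun p hp hpn =>
      (Nat.prime_dvd_prime_iff_eq hp Nat.prime_two).mp (hp.dvd_of_dvd_pow hpn)⟩
  · rintro ⟨hn, h⟩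
    exact ⟨_, Nat.eq_prime_pow_of_unique_prime_dvd hn fun hp hpn => h _ hp hpn⟩

end Nat

/-- with pointwise products of subsets of ℕ and complements relative
to ℕ, for `A = {0,1}` the set `(((Aᶜ · Aᶜ)ᶜ ∩ {0,1,2}ᶜ) · ({0} ∩ {1})ᶜ)ᶜ` is
exactly the set of powers of two. -/
theorem statement8 :
    (((({0, 1} : Set ℕ)ᶜ * ({0, 1} : Set ℕ)ᶜ)ᶜ ∩ ({0, 1, 2} : Set ℕ)ᶜ) *
        (({0} : Set ℕ) ∩ {1})ᶜ)ᶜ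
      = {n : ℕ | ∃ i : ℕ, n = 2 ^ i} := by
  have hdisjoint : (({0} : Set ℕ) ∩ {1})ᶜ = Set.univ := by simp
  ext n
  rw [hdisjoint, Nat.compl_composites_inter_compl_zero_one_two, Set.mem_compl_iff,
    Set.mem_mul_univ_iff_exists_dvd, Set.mem_ofPred_eq, Nat.exists_eq_two_pow_iff]
  simp only [Set.mem_ofPred_eq, not_exists, not_and, and_imp]
  constructor
  · intro h
    exact ⟨by rintro rfl; exact h 3 Nat.prime_three (by norm_num) (dvd_zero 3),
      fun p hp hpn => by_contra fun hp2 => h p hp hp2 hpn⟩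
  · rintro ⟨-, h⟩ p hp hp2 hpn
    exact hp2 (h p hp hpn)
end

section
/- Let n ≥ 1 and consider terms over variables v₁, …, vₙ built from the operations ∪, ∩ and complement, interpreted over subsets of ℕ: for an assignment a : {1,…,n} → ℕ, ⟦vᵢ⟧_a = {a(i)}, ⟦s ∪ t⟧_a = ⟦s⟧_a ∪ ⟦t⟧_a, ⟦s ∩ t⟧_a = ⟦s⟧_a ∩ ⟦t⟧_a, and ⟦t̄⟧_a = ℕ ∖ ⟦t⟧_a. Let (t₁, t'₁), …, (t_m, t'_m) be finitely many pairs of such terms. If there exists an assignment a : {1,…,n} → ℕ with ⟦tⱼ⟧_a = ⟦t'ⱼ⟧_a for all j = 1, …, m, then there exists such an assignment with a(i) ≤ n − 1 for all i. -/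
/-!
Evaluation commutes with preimages: if `g⁻¹' {a i} = {b i}` for every variable, then
`⟦s⟧_b = g⁻¹' ⟦s⟧_a` for every term `s`. Such a `g` exists as soon as `a` and `b` identify the
same variables, so whether an assignment solves a system depends only on which variables it
identifies. Sending each variable to the index of a variable with the same value gives an
assignment with that pattern and values below `n`.
-/

/-- Terms over variables `v₁, …, vₙ` built from `∪`, `∩` and complement. -/
inductive BTerm (n : ℕ) : Type where
  | var : Fin n → BTerm n
  | union : BTerm n → BTerm n → BTerm n
  | inter : BTerm n → BTerm n → BTerm n
  | compl : BTerm n → BTerm n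

/-- Interpretation of a term under an assignment `a : Fin n → ℕ`:
`⟦vᵢ⟧ = {a i}`, `∪`/`∩` are set union/intersection and complement is relative
to ℕ. -/
def BTerm.eval {n : ℕ} (a : Fin n → ℕ) : BTerm n → Set ℕ
  | .var i => {a i}
  | .union s t => BTerm.eval a s ∪ BTerm.eval a t
  | .inter s t => BTerm.eval a s ∩ BTerm.eval a t
  | .compl t => (BTerm.eval a t)ᶜ

namespace BTerm

variable {n : ℕ} {a b : Fin n → ℕ}

theorem eval_eq_preimage {g : ℕ → ℕ} (hg : ∀ i, g ⁻¹' {a i} = {b i}) (s : BTerm n) :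
    s.eval b = g ⁻¹' s.eval a := by
  induction s with
  | var i => exact (hg i).symm
  | union s t hs ht => rw [eval, eval, hs, ht, Set.preimage_union]
  | inter s t hs ht => rw [eval, eval, hs, ht, Set.preimage_inter]
  | compl s hs => rw [eval, eval, hs, Set.preimage_compl]

theorem exists_preimage_singleton_eq (hab : ∀ i j, a i = a j ↔ b i = b j) :
    ∃ g : ℕ → ℕ, ∀ i, g ⁻¹' {a i} = {b i} := by
  classical
  obtain ⟨c, hc⟩ := (Set.finite_range a).exists_notMem
  refine ⟨fun x => if h : ∃ j, b j = x then a h.choose else c, fun i => ?_⟩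
  ext x
  simp only [Set.mem_preimage, Set.mem_singleton_iff]
  split_ifs with h
  · rw [hab, h.choose_spec, eq_comm]
  · exact iff_of_false (fun hci => hc ⟨i, hci.symm⟩) fun hx => h ⟨i, hx.symm⟩

theorem eval_eq_eval_of_forall_eq_iff (hab : ∀ i j, a i = a j ↔ b i = b j) {s s' : BTerm n}
    (h : s.eval a = s'.eval a) : s.eval b = s'.eval b := by
  obtain ⟨g, hg⟩ := exists_preimage_singleton_eq hab
  rw [eval_eq_preimage hg, eval_eq_preimage hg, h]

end BTerm

theorem Function.apply_eq_apply_iff_invFun_apply_eq {α β : Type*} [Nonempty α] (f : α → β)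
    (x y : α) : f x = f y ↔ invFun f (f x) = invFun f (f y) :=
  ⟨congrArg (invFun f), fun h => by
    rw [← invFun_eq (f := f) ⟨x, rfl⟩, h, invFun_eq (f := f) ⟨y, rfl⟩]⟩

/-- small-solution property for systems of term equalities over
`{−, ∩, ∪}`: if some assignment satisfies all equalities then some assignment
with values ≤ n − 1 does. -/
theorem statement10 (n : ℕ) (hn : 1 ≤ n) (m : ℕ) (t t' : Fin m → BTerm n)
    (h : ∃ a : Fin n → ℕ, ∀ j : Fin m, BTerm.eval a (t j) = BTerm.eval a (t' j)) :
    ∃ a : Fin n → ℕ, (∀ j : Fin m, BTerm.eval a (t j) = BTerm.eval a (t' j)) ∧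
      ∀ i : Fin n, a i ≤ n - 1 := by
  have : Nonempty (Fin n) := ⟨⟨0, hn⟩⟩
  obtain ⟨a, ha⟩ := h
  let b (i : Fin n) : Fin n := Function.invFun a (a i)
  have hab (i j : Fin n) : a i = a j ↔ (b i : ℕ) = b j :=
    (Function.apply_eq_apply_iff_invFun_apply_eq a i j).trans Fin.val_inj.symm
  exact ⟨fun i => b i, fun j => BTerm.eval_eq_eval_of_forall_eq_iff hab (ha j),
    fun i => Nat.le_sub_one_of_lt (b i).isLt⟩
end
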